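/- (OHOB) For integers l ≥ m > 0: h(l, m, 0) ≤ h(l-1, m-1, 1) + 1. -/
import Mathlib


/-- Expected number of rounds until at most one of three piles remains nonempty,
where each round removes one item from a nonempty pile chosen uniformly at random. -/
noncomputable def h3 : ℕ → ℕ → ℕ → ℝ
  | 0, 0, _ => 0
  | 0, _ + 1, 0 => 0
  | _ + 1, 0, 0 => 0
  | 0, b + 1, c + 1 => 1 + (h3 0 b (c + 1) + h3 0 (b + 1) c) / 2
  | a + 1, 0, c + 1 => 1 + (h3 a 0 (c + 1) + h3 (a + 1) 0 c) / 2
  | a + 1, b + 1, 0 => 1 + (h3 a (b + 1) 0 + h3 (a + 1) b 0) / 2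
  | a + 1, b + 1, c + 1 =>
      1 + (h3 a (b + 1) (c + 1) + h3 (a + 1) b (c + 1) + h3 (a + 1) (b + 1) c) / 3
termination_by a b c => a + b + c

theorem h3_nonneg (a b c : ℕ) : 0 ≤ h3 a b c := by
  match a, b, c with
  | 0, 0, c => rw [h3]
  | 0, b + 1, 0 => rw [h3]
  | a + 1, 0, 0 => rw [h3]
  | 0, b + 1, c + 1 =>
      rw [h3]
      have h1 := h3_nonneg 0 b (c + 1)
      have h2 := h3_nonneg 0 (b + 1) c
      linarith
  | a + 1, 0, c + 1 =>
      rw [h3]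
      have h1 := h3_nonneg a 0 (c + 1)
      have h2 := h3_nonneg (a + 1) 0 c
      linarith
  | a + 1, b + 1, 0 =>
      rw [h3]
      have h1 := h3_nonneg a (b + 1) 0
      have h2 := h3_nonneg (a + 1) b 0
      linarith
  | a + 1, b + 1, c + 1 =>
      rw [h3]
      have h1 := h3_nonneg a (b + 1) (c + 1)
      have h2 := h3_nonneg (a + 1) b (c + 1)
      have h3' := h3_nonneg (a + 1) (b + 1) c
      linarith
termination_by a + b + c

theorem h3_slice1 (b c : ℕ) : h3 0 b c = h3 b c 0 := by
  match b, c with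
  | 0, 0 => rfl
  | 0, c + 1 => rw [h3, h3]
  | b + 1, 0 => rw [h3, h3]
  | b + 1, c + 1 =>
      rw [h3, show h3 (b+1) (c+1) 0 = 1 + (h3 b (c + 1) 0 + h3 (b + 1) c 0) / 2 from by conv_lhs => rw [h3],
        h3_slice1 b (c + 1), h3_slice1 (b + 1) c]
termination_by b + c

theorem h3_slice2 (a c : ℕ) : h3 a 0 c = h3 a c 0 := by
  match a, c with
  | 0, 0 => rfl
  | 0, c + 1 => rw [h3, h3]
  | a + 1, 0 => rfl
  | a + 1, c + 1 =>
      rw [h3, show h3 (a+1) (c+1) 0 = 1 + (h3 a (c + 1) 0 + h3 (a + 1) c 0) / 2 from by conv_lhs => rw [h3],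
        h3_slice2 a (c + 1), h3_slice2 (a + 1) c]
termination_by a + c

theorem h3_a10_le (a : ℕ) : h3 a 1 0 ≤ 2 := by
  induction a with
  | zero => rw [h3]; norm_num
  | succ a ih =>
      rw [show h3 (a+1) 1 0 = 1 + (h3 a 1 0 + h3 (a + 1) 0 0) / 2 from by conv_lhs => rw [h3], h3]
      linarith

theorem h3_1b0_le (b : ℕ) : h3 1 b 0 ≤ 2 := by
  induction b with
  | zero => rw [h3]; norm_num
  | succ b ih =>
      rw [show h3 1 (b+1) 0 = 1 + (h3 0 (b + 1) 0 + h3 1 b 0) / 2 from by conv_lhs => rw [h3], h3]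
      linarith

theorem h3_0b0 (b : ℕ) : h3 0 b 0 = 0 := by
  match b with
  | 0 => rw [h3]
  | b + 1 => rw [h3]

theorem h3_a00 (a : ℕ) : h3 a 0 0 = 0 := by
  match a with
  | 0 => rw [h3]
  | a + 1 => rw [h3]

theorem h3_diag (l m : ℕ) : h3 (l + 1) (m + 1) 0 ≤ h3 l m 0 + 2 := by
  match l, m with
  | 0, m => rw [h3_0b0]; have := h3_1b0_le (m + 1); linarith
  | l + 1, 0 => rw [h3_a00]; have := h3_a10_le (l + 2); linarith
  | l + 1, m + 1 =>
      rw [show h3 (l+2) (m+2) 0 = 1 + (h3 (l+1) (m + 2) 0 + h3 (l + 2) (m+1) 0) / 2 from by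
            rw [h3],
        show h3 (l+1) (m+1) 0 = 1 + (h3 l (m + 1) 0 + h3 (l + 1) m 0) / 2 from by conv_lhs => rw [h3]]
      have h1 := h3_diag l (m + 1)
      have h2 := h3_diag (l + 1) m
      linarith
termination_by l + m

theorem h3_add_one (a b : ℕ) (h : 1 ≤ a + b) : h3 a b 0 + 1 ≤ h3 a b 1 := by
  match a, b with
  | 0, 0 => omega
  | 0, b + 1 =>
      rw [h3_0b0, h3_slice1,
        show h3 (b+1) 1 0 = 1 + (h3 b 1 0 + h3 (b + 1) 0 0) / 2 from by conv_lhs => rw [h3], h3_a00]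
      have := h3_nonneg b 1 0
      linarith
  | a + 1, 0 =>
      rw [h3_a00, h3_slice2,
        show h3 (a+1) 1 0 = 1 + (h3 a 1 0 + h3 (a + 1) 0 0) / 2 from by conv_lhs => rw [h3], h3_a00]
      have := h3_nonneg a 1 0
      linarith
  | a + 1, b + 1 =>
      rw [show h3 (a+1) (b+1) 1 =
            1 + (h3 a (b + 1) 1 + h3 (a + 1) b 1 + h3 (a + 1) (b + 1) 0) / 3 from by conv_lhs => rw [h3],
        show h3 (a+1) (b+1) 0 = 1 + (h3 a (b + 1) 0 + h3 (a + 1) b 0) / 2 from by conv_lhs => rw [h3]]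
      have h1 := h3_add_one a (b + 1) (by omega)
      have h2 := h3_add_one (a + 1) b (by omega)
      linarith
termination_by a + b

theorem stmt8 (l m : ℕ) (hlm : m ≤ l) (hm : 0 < m) :
    h3 l m 0 ≤ h3 (l - 1) (m - 1) 1 + 1 := by
  obtain ⟨l', rfl⟩ : ∃ l', l = l' + 1 := ⟨l - 1, by omega⟩
  obtain ⟨m', rfl⟩ : ∃ m', m = m' + 1 := ⟨m - 1, by omega⟩
  simp only [Nat.add_sub_cancel]
  rcases Nat.eq_zero_or_pos (l' + m') with h0 | h0
  · obtain ⟨rfl, rfl⟩ : l' = 0 ∧ m' = 0 := by omega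
    rw [show h3 1 1 0 = 1 + (h3 0 1 0 + h3 1 0 0) / 2 from by conv_lhs => rw [h3], h3_0b0, h3_a00,
      show h3 0 0 1 = 0 from by conv_lhs => rw [h3]]
    norm_num
  · have h1 := h3_diag l' m'
    have h2 := h3_add_one l' m' (by omega)
    linarith
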